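/- Compatibility of the toric charts of the noncommutative local projective plane: in the localization 𝔸^q⟨a_1^{-1}, a_3^{-1}⟩ the identity a_1 a_3 a_2 · (c_1 a_1^{-1})³ = q^{-6} · c_1 c_3 c_2 holds. (This is the identity G_{01}(w_1 x_1³) = q^{-6} · G_{02}(w_2) showing that the images of the two chart maps G_{01} and G_{02} agree on the overlap.) -/

import Mathlib

/-! Statement 12: affine chart of the noncommutative local projective plane. -/

/-- Generators of the quiver algebra `𝔸^q` localized at `a₁, a₃`:
three idempotents `e₁,e₂,e₃`, nine arrows, and the inverses `a₁⁻¹, a₃⁻¹`. -/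
inductive QGen : Type
  | e1 | e2 | e3
  | a1 | a2 | a3 | b1 | b2 | b3 | c1 | c2 | c3
  | ia1 | ia3
deriving DecidableEq

open QGen

/-- Defining relations of `𝔸^q⟨a₁⁻¹, a₃⁻¹⟩` inside the free algebra. -/
inductive QRel (K : Type) [CommRing K] (q : Kˣ) :
    FreeAlgebra K QGen → FreeAlgebra K QGen → Prop
  | sum : QRel K q (FreeAlgebra.ι K e1 + FreeAlgebra.ι K e2 + FreeAlgebra.ι K e3) 1
  | orth (u v : QGen) : u ≠ v → u ∈ [e1, e2, e3] → v ∈ [e1, e2, e3] →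
      QRel K q (FreeAlgebra.ι K u * FreeAlgebra.ι K v) 0
  | idem (u : QGen) : u ∈ [e1, e2, e3] →
      QRel K q (FreeAlgebra.ι K u * FreeAlgebra.ι K u) (FreeAlgebra.ι K u)
  -- arrows `a₁,b₁,c₁ : 1 → 2`, `a₂,b₂,c₂ : 2 → 3`, `a₃,b₃,c₃ : 3 → 1`
  | cor_a1 : QRel K q (FreeAlgebra.ι K a1)
      (FreeAlgebra.ι K e2 * FreeAlgebra.ι K a1 * FreeAlgebra.ι K e1)
  | cor_b1 : QRel K q (FreeAlgebra.ι K b1)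
      (FreeAlgebra.ι K e2 * FreeAlgebra.ι K b1 * FreeAlgebra.ι K e1)
  | cor_c1 : QRel K q (FreeAlgebra.ι K c1)
      (FreeAlgebra.ι K e2 * FreeAlgebra.ι K c1 * FreeAlgebra.ι K e1)
  | cor_a2 : QRel K q (FreeAlgebra.ι K a2)
      (FreeAlgebra.ι K e3 * FreeAlgebra.ι K a2 * FreeAlgebra.ι K e2)
  | cor_b2 : QRel K q (FreeAlgebra.ι K b2)
      (FreeAlgebra.ι K e3 * FreeAlgebra.ι K b2 * FreeAlgebra.ι K e2)
  | cor_c2 : QRel K q (FreeAlgebra.ι K c2)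
      (FreeAlgebra.ι K e3 * FreeAlgebra.ι K c2 * FreeAlgebra.ι K e2)
  | cor_a3 : QRel K q (FreeAlgebra.ι K a3)
      (FreeAlgebra.ι K e1 * FreeAlgebra.ι K a3 * FreeAlgebra.ι K e3)
  | cor_b3 : QRel K q (FreeAlgebra.ι K b3)
      (FreeAlgebra.ι K e1 * FreeAlgebra.ι K b3 * FreeAlgebra.ι K e3)
  | cor_c3 : QRel K q (FreeAlgebra.ι K c3)
      (FreeAlgebra.ι K e1 * FreeAlgebra.ι K c3 * FreeAlgebra.ι K e3)
  -- the nine superpotential relations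
  | r1 : QRel K q (FreeAlgebra.ι K a3 * FreeAlgebra.ι K b2)
      ((q : K) • (FreeAlgebra.ι K b3 * FreeAlgebra.ι K a2))
  | r2 : QRel K q (FreeAlgebra.ι K a1 * FreeAlgebra.ι K b3)
      ((q : K) • (FreeAlgebra.ι K b1 * FreeAlgebra.ι K a3))
  | r3 : QRel K q (FreeAlgebra.ι K a2 * FreeAlgebra.ι K b1)
      ((q : K) • (FreeAlgebra.ι K b2 * FreeAlgebra.ι K a1))
  | r4 : QRel K q (FreeAlgebra.ι K b2 * FreeAlgebra.ι K c1)
      ((q : K) • (FreeAlgebra.ι K c2 * FreeAlgebra.ι K b1))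
  | r5 : QRel K q (FreeAlgebra.ι K b3 * FreeAlgebra.ι K c2)
      ((q : K) • (FreeAlgebra.ι K c3 * FreeAlgebra.ι K b2))
  | r6 : QRel K q (FreeAlgebra.ι K b1 * FreeAlgebra.ι K c3)
      ((q : K) • (FreeAlgebra.ι K c1 * FreeAlgebra.ι K b3))
  | r7 : QRel K q (FreeAlgebra.ι K c1 * FreeAlgebra.ι K a3)
      ((q : K) • (FreeAlgebra.ι K a1 * FreeAlgebra.ι K c3))
  | r8 : QRel K q (FreeAlgebra.ι K c2 * FreeAlgebra.ι K a1)
      ((q : K) • (FreeAlgebra.ι K a2 * FreeAlgebra.ι K c1))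
  | r9 : QRel K q (FreeAlgebra.ι K c3 * FreeAlgebra.ι K a2)
      ((q : K) • (FreeAlgebra.ι K a3 * FreeAlgebra.ι K c2))
  -- localization at a₁ (tail 1, head 2) and a₃ (tail 3, head 1)
  | inv_a1_left : QRel K q (FreeAlgebra.ι K ia1 * FreeAlgebra.ι K a1) (FreeAlgebra.ι K e1)
  | inv_a1_right : QRel K q (FreeAlgebra.ι K a1 * FreeAlgebra.ι K ia1) (FreeAlgebra.ι K e2)
  | inv_a1_cor : QRel K q (FreeAlgebra.ι K ia1)
      (FreeAlgebra.ι K e1 * FreeAlgebra.ι K ia1 * FreeAlgebra.ι K e2)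
  | inv_a3_left : QRel K q (FreeAlgebra.ι K ia3 * FreeAlgebra.ι K a3) (FreeAlgebra.ι K e3)
  | inv_a3_right : QRel K q (FreeAlgebra.ι K a3 * FreeAlgebra.ι K ia3) (FreeAlgebra.ι K e1)
  | inv_a3_cor : QRel K q (FreeAlgebra.ι K ia3)
      (FreeAlgebra.ι K e3 * FreeAlgebra.ι K ia3 * FreeAlgebra.ι K e1)

/-- The localized quiver algebra `𝔸^q⟨a₁⁻¹, a₃⁻¹⟩`. -/
abbrev QAlg (K : Type) [CommRing K] (q : Kˣ) := RingQuot (QRel K q)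

/-- The image of a generator in `𝔸^q⟨a₁⁻¹, a₃⁻¹⟩`. -/
def qel (K : Type) [CommRing K] (q : Kˣ) (x : QGen) : QAlg K q :=
  RingQuot.mkAlgHom K (QRel K q) (FreeAlgebra.ι K x)

/-- Generators of the noncommutative `ℂ³` algebra `K⟨x₁,y₁,w₁⟩`. -/
inductive C3Gen : Type
  | x1 | y1 | w1
deriving DecidableEq

/-!
In the chart coordinate `x = c₁a₁⁻¹`, the relation `c₂a₁ = q a₂c₁` becomes `c₂ = q a₂x`
(using `c₂ = c₂e₂ = c₂a₁a₁⁻¹`). Substituting this three times into `c₁c₃c₂`, and moving `c₁` and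
`c₃` to the right past `a₃` and `a₂` with `c₁a₃ = q a₁c₃` and `c₃a₂ = q a₃c₂`, turns `c₁c₃c₂`
into `q⁶ a₁a₃a₂x³`; each commutation costs one factor of `q`.
-/

section ChartAlgebra

variable {K A : Type*} [CommSemiring K] [Semiring A] [Algebra K A]

theorem eq_smul_mul_mul_of_right_inverse {q : K} {a a' c c' e i : A}
    (hc'e : c' * e = c') (hai : a * i = e) (hc'a : c' * a = q • (a' * c)) :
    c' = q • (a' * (c * i)) := by
  calc c' = c' * a * i := by rw [mul_assoc, hai, hc'e]
    _ = q • (a' * (c * i)) := by rw [hc'a, smul_mul_assoc, mul_assoc]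

theorem mul_mul_eq_pow_six_smul {q : K} {a₁ a₂ a₃ c₁ c₂ c₃ x : A}
    (h₁₃ : c₁ * a₃ = q • (a₁ * c₃)) (h₃₂ : c₃ * a₂ = q • (a₃ * c₂))
    (hc₂ : c₂ = q • (a₂ * x)) :
    c₁ * c₃ * c₂ = q ^ 6 • (a₁ * a₃ * a₂ * x ^ 3) := by
  have h₃₂' : c₃ * a₂ = q ^ 2 • (a₃ * a₂ * x) := by
    rw [h₃₂, hc₂, mul_smul_comm, smul_smul, ← pow_two, mul_assoc]
  calc c₁ * c₃ * c₂ = q • (c₁ * (c₃ * a₂) * x) := by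
        rw [hc₂, mul_smul_comm, mul_assoc, mul_assoc, mul_assoc]
    _ = q ^ 3 • (c₁ * a₃ * a₂ * x ^ 2) := by
        rw [h₃₂']
        simp only [smul_mul_assoc, mul_smul_comm, mul_assoc, sq]
        module
    _ = q ^ 4 • (a₁ * (c₃ * a₂) * x ^ 2) := by
        rw [h₁₃]
        simp only [smul_mul_assoc, mul_assoc]
        module
    _ = q ^ 6 • (a₁ * a₃ * a₂ * x ^ 3) := by
        rw [h₃₂']
        simp only [smul_mul_assoc, mul_smul_comm, mul_assoc, pow_succ', pow_zero, mul_one]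
        module

end ChartAlgebra

namespace QAlg

variable (K : Type) [CommRing K] (q : Kˣ)

theorem c1_mul_a3 : qel K q c1 * qel K q a3 = (q : K) • (qel K q a1 * qel K q c3) := by
  simpa [qel] using RingQuot.mkAlgHom_rel K (QRel.r7 (q := q))

theorem c2_mul_a1 : qel K q c2 * qel K q a1 = (q : K) • (qel K q a2 * qel K q c1) := by
  simpa [qel] using RingQuot.mkAlgHom_rel K (QRel.r8 (q := q))

theorem c3_mul_a2 : qel K q c3 * qel K q a2 = (q : K) • (qel K q a3 * qel K q c2) := by
  simpa [qel] using RingQuot.mkAlgHom_rel K (QRel.r9 (q := q))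

theorem a1_mul_ia1 : qel K q a1 * qel K q ia1 = qel K q e2 := by
  simpa [qel] using RingQuot.mkAlgHom_rel K (QRel.inv_a1_right (q := q))

theorem c2_mul_e2 : qel K q c2 * qel K q e2 = qel K q c2 := by
  have hc2 : qel K q c2 = qel K q e3 * qel K q c2 * qel K q e2 := by
    simpa [qel] using RingQuot.mkAlgHom_rel K (QRel.cor_c2 (q := q))
  have he2 : qel K q e2 * qel K q e2 = qel K q e2 := by
    simpa [qel] using RingQuot.mkAlgHom_rel K (QRel.idem (q := q) e2 (by simp))
  rw [hc2, mul_assoc _ (qel K q e2), he2]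

theorem c2_eq_smul_a2_mul_chart :
    qel K q c2 = (q : K) • (qel K q a2 * (qel K q c1 * qel K q ia1)) :=
  eq_smul_mul_mul_of_right_inverse (c2_mul_e2 K q) (a1_mul_ia1 K q) (c2_mul_a1 K q)

end QAlg

/-- Compatibility of the toric charts of the noncommutative local projective
plane: in `𝔸^q⟨a₁⁻¹, a₃⁻¹⟩` one has `a₁a₃a₂ · (c₁a₁⁻¹)³ = q⁻⁶ · c₁c₃c₂`, i.e.
`G₀₁(w₁x₁³) = q⁻⁶ · G₀₂(w₂)`. -/
theorem nc_local_P2_chart_compatibility (K : Type) [CommRing K] (q : Kˣ) :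
    qel K q a1 * qel K q a3 * qel K q a2 * (qel K q c1 * qel K q ia1) ^ 3
      = (((q⁻¹ : Kˣ) : K) ^ 6) • (qel K q c1 * qel K q c3 * qel K q c2) := by
  rw [mul_mul_eq_pow_six_smul (QAlg.c1_mul_a3 K q) (QAlg.c3_mul_a2 K q)
    (QAlg.c2_eq_smul_a2_mul_chart K q), smul_smul, ← mul_pow, ← Units.val_mul, inv_mul_cancel,
    Units.val_one, one_pow, one_smul]
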